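/- For every u ∈ 𝒟 and every real t ≥ 0 one has I(u) ≥ I(t·u) + ((1−t^q)/q)·⟨I'(u),u⟩ + ((1−t^p)/p − (1−t^q)/q)·(‖u⁺‖^p + ‖u⁻‖^p). -/

import Mathlib

/-
Write `N = ‖u‖^p`, `S = ∑ c|u|^q` and `L = ∑ c|u|^q ln |u|^r`. By homogeneity
`I(tu) = t^p N/p + r t^q S/q² - t^q (L + r S ln t)/q`, and `⟨I'(u),u⟩ = N - L`, so that
`I(u) - I(tu) - (1 - t^q)/q ⟨I'(u),u⟩`
`  = ((1 - t^p)/p - (1 - t^q)/q) N + (r/q)((1 - t^q)/q + t^q ln t) S`.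
Both coefficients are nonnegative (Bernoulli's inequality for `(t^p)^(q/p)`, and `s ln s ≥ s - 1`
for `s = t^q`), and `‖u⁺‖^p + ‖u⁻‖^p ≤ ‖u‖^p` because `u⁺(n), u⁻(n)` never have opposite signs,
and neither do `Δu⁺(n), Δu⁻(n)`.
-/

noncomputable section

open Real Filter Set

namespace DPLap

/-- Forward difference operator. -/
def dlt (u : ℤ → ℝ) (n : ℤ) : ℝ := u (n + 1) - u n

/-- Positive part `u⁺`. -/
def pos (u : ℤ → ℝ) : ℤ → ℝ := fun n => max (u n) 0

/-- Negative part `u⁻`. -/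
def neg (u : ℤ → ℝ) : ℤ → ℝ := fun n => min (u n) 0

/-- Summand of the `E`-norm. -/
def nsum (a b : ℤ → ℝ) (p : ℕ) (u : ℤ → ℝ) (n : ℤ) : ℝ :=
  a n * |dlt u n| ^ p + b n * |u n| ^ p

/-- Membership in the space `E`. -/
def memE (a b : ℤ → ℝ) (p : ℕ) (u : ℤ → ℝ) : Prop :=
  Summable (nsum a b p u)

/-- The norm `‖u‖ = (∑ [a|Δu|^p + b|u|^p])^(1/p)`. -/
def dnorm (a b : ℤ → ℝ) (p : ℕ) (u : ℤ → ℝ) : ℝ :=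
  (∑' n : ℤ, nsum a b p u n) ^ ((p : ℝ)⁻¹)

/-- Summand `c(n)|u(n)|^q ln(|u(n)|^r)` of the logarithmic term (with the
convention `0^q ln 0 = 0`, automatic from `Real.rpow` and `Real.log`). -/
def logSummand (c : ℤ → ℝ) (q r : ℝ) (u : ℤ → ℝ) (n : ℤ) : ℝ :=
  c n * |u n| ^ q * Real.log (|u n| ^ r)

/-- Membership in `𝒟`. -/
def memD (a b c : ℤ → ℝ) (p : ℕ) (q r : ℝ) (u : ℤ → ℝ) : Prop :=
  memE a b p u ∧ Summable (logSummand c q r u)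

/-- The energy functional `I`. -/
def En (a b c : ℤ → ℝ) (p : ℕ) (q r : ℝ) (u : ℤ → ℝ) : ℝ :=
  (1 / (p : ℝ)) * dnorm a b p u ^ p
    + (r / q ^ 2) * ∑' n : ℤ, c n * |u n| ^ q
    - (1 / q) * ∑' n : ℤ, logSummand c q r u n

/-- The pairing `⟨I'(u), v⟩`. -/
def pr (a b c : ℤ → ℝ) (p : ℕ) (q r : ℝ) (u v : ℤ → ℝ) : ℝ :=
  (∑' n : ℤ, (a n * |dlt u n| ^ (p - 2) * dlt u n * dlt v n
      + b n * |u n| ^ (p - 2) * u n * v n))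
    - ∑' n : ℤ, c n * |u n| ^ (q - 2) * u n * v n * Real.log (|u n| ^ r)

/-- The Nehari set `𝒩`. -/
def Nset (a b c : ℤ → ℝ) (p : ℕ) (q r : ℝ) : Set (ℤ → ℝ) :=
  {u | memD a b c p q r u ∧ u ≠ 0 ∧ pr a b c p q r u u = 0}

/-- The sign-changing Nehari set `ℳ`. -/
def Mset (a b c : ℤ → ℝ) (p : ℕ) (q r : ℝ) : Set (ℤ → ℝ) :=
  {u | memD a b c p q r u ∧ pos u ≠ 0 ∧ neg u ≠ 0 ∧
      pr a b c p q r u (pos u) = 0 ∧ pr a b c p q r u (neg u) = 0}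

/-- `m* = inf_ℳ I`. -/
def mStar (a b c : ℤ → ℝ) (p : ℕ) (q r : ℝ) : ℝ :=
  sInf (En a b c p q r '' Mset a b c p q r)

/-- `c* = inf_𝒩 I`. -/
def cStar (a b c : ℤ → ℝ) (p : ℕ) (q r : ℝ) : ℝ :=
  sInf (En a b c p q r '' Nset a b c p q r)

theorem one_sub_rpow_div_le_one_sub_rpow_div {p q t : ℝ} (hp : 0 < p) (hpq : p ≤ q) (ht : 0 ≤ t) :
    (1 - t ^ q) / q ≤ (1 - t ^ p) / p := by
  have hq : 0 < q := hp.trans_le hpq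
  have bernoulli := one_add_mul_self_le_rpow_one_add (s := t ^ p - 1)
    (by linarith [rpow_nonneg ht p]) ((one_le_div hp).2 hpq)
  rw [add_sub_cancel, ← rpow_mul ht, mul_div_cancel₀ _ hp.ne'] at bernoulli
  rw [div_le_div_iff₀ hq hp]
  have scaled := mul_le_mul_of_nonneg_left bernoulli hp.le
  rw [mul_add, ← mul_assoc, mul_div_cancel₀ _ hp.ne'] at scaled
  linarith

theorem one_sub_rpow_div_add_rpow_mul_log_nonneg {q t : ℝ} (hq : 0 < q) (ht : 0 ≤ t) :
    0 ≤ (1 - t ^ q) / q + t ^ q * log t := by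
  rcases ht.eq_or_lt with rfl | ht
  · simp [zero_rpow hq.ne', hq.le]
  have hs := rpow_pos_of_pos ht q
  have hlog := mul_le_mul_of_nonneg_left (one_sub_inv_le_log_of_pos hs) hs.le
  rw [log_rpow ht, mul_sub, mul_inv_cancel₀ hs.ne'] at hlog
  rw [div_add' _ _ _ hq.ne', le_div_iff₀ hq]
  linarith

theorem abs_pow_add_abs_pow_le {p : ℕ} (hp : p ≠ 0) {x y : ℝ}
    (hxy : 0 ≤ x ∧ 0 ≤ y ∨ x ≤ 0 ∧ y ≤ 0) : |x| ^ p + |y| ^ p ≤ |x + y| ^ p := by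
  rw [(abs_add_eq_add_abs_iff x y).2 hxy]
  exact pow_add_pow_le (abs_nonneg x) (abs_nonneg y) hp

theorem abs_pow_sub_two_mul_self_mul_self {p : ℕ} (hp : 2 ≤ p) (x : ℝ) :
    |x| ^ (p - 2) * x * x = |x| ^ p := by
  rw [mul_assoc, ← abs_mul_abs_self, ← sq, ← pow_add, Nat.sub_add_cancel hp]

theorem abs_rpow_sub_two_mul_self_mul_self {q : ℝ} (hq : q ≠ 0) (x : ℝ) :
    |x| ^ (q - 2) * x * x = |x| ^ q := by
  rcases eq_or_ne x 0 with rfl | hx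
  · simp [zero_rpow hq]
  rw [mul_assoc, ← abs_mul_abs_self, rpow_sub (abs_pos.2 hx), rpow_two]
  field_simp

theorem eventually_abs_le_one_of_summable_mul_pow {ι : Type*} {b u : ι → ℝ} {b0 : ℝ}
    (hb0 : 0 < b0) (hbb : ∀ n, b0 ≤ b n) {p : ℕ} (hp : p ≠ 0)
    (hu : Summable fun n => b n * |u n| ^ p) : ∀ᶠ n in cofinite, |u n| ≤ 1 := by
  filter_upwards [hu.tendsto_cofinite_zero.eventually_lt_const hb0] with n hn
  have : b0 * |u n| ^ p < b0 * 1 := by nlinarith [hbb n, pow_nonneg (abs_nonneg (u n)) p]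
  exact ((pow_lt_one_iff_of_nonneg (abs_nonneg _) hp).1 (lt_of_mul_lt_mul_left this hb0.le)).le

theorem summable_mul_abs_rpow_of_eventually_abs_le_one {ι : Type*} {c u : ι → ℝ}
    (hc : Summable c) (hc0 : ∀ n, 0 ≤ c n) {q : ℝ} (hq : 0 ≤ q)
    (hu : ∀ᶠ n in cofinite, |u n| ≤ 1) : Summable fun n => c n * |u n| ^ q :=
  hc.of_norm_bounded_eventually <| hu.mono fun n hn => by
    rw [Real.norm_of_nonneg (mul_nonneg (hc0 n) (by positivity))]
    exact mul_le_of_le_one_right (hc0 n) (rpow_le_one (abs_nonneg _) hn hq)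

theorem pos_add_neg (u : ℤ → ℝ) (n : ℤ) : pos u n + neg u n = u n :=
  (max_add_min (u n) 0).trans (add_zero _)

theorem dlt_pos_add_dlt_neg (u : ℤ → ℝ) (n : ℤ) : dlt (pos u) n + dlt (neg u) n = dlt u n := by
  simp only [dlt]
  linarith [pos_add_neg u n, pos_add_neg u (n + 1)]

theorem pos_neg_same_sign (u : ℤ → ℝ) (n : ℤ) :
    0 ≤ pos u n ∧ 0 ≤ neg u n ∨ pos u n ≤ 0 ∧ neg u n ≤ 0 := by
  simp only [pos, neg]
  rcases le_total 0 (u n) with h | h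
  · exact Or.inl ⟨le_max_right _ _, (min_eq_right h).ge⟩
  · exact Or.inr ⟨(max_eq_right h).le, min_le_right _ _⟩

theorem dlt_pos_dlt_neg_same_sign (u : ℤ → ℝ) (n : ℤ) :
    0 ≤ dlt (pos u) n ∧ 0 ≤ dlt (neg u) n ∨ dlt (pos u) n ≤ 0 ∧ dlt (neg u) n ≤ 0 := by
  simp only [dlt, pos, neg, sub_nonneg, sub_nonpos]
  rcases le_total (u n) (u (n + 1)) with h | h
  · exact Or.inl ⟨max_le_max_right 0 h, min_le_min_right 0 h⟩
  · exact Or.inr ⟨max_le_max_right 0 h, min_le_min_right 0 h⟩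

section Norm

variable {a b : ℤ → ℝ} {p : ℕ} (ha : ∀ n, 0 ≤ a n) (hb : ∀ n, 0 ≤ b n)
include ha hb

theorem nsum_nonneg (u : ℤ → ℝ) (n : ℤ) : 0 ≤ nsum a b p u n :=
  add_nonneg (mul_nonneg (ha n) (by positivity)) (mul_nonneg (hb n) (by positivity))

theorem summable_mul_abs_pow_of_memE {u : ℤ → ℝ} (hu : memE a b p u) :
    Summable fun n => b n * |u n| ^ p :=
  hu.of_nonneg_of_le (fun n => mul_nonneg (hb n) (by positivity))
    fun n => le_add_of_nonneg_left (mul_nonneg (ha n) (by positivity))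

theorem nsum_pos_add_nsum_neg_le (hp : p ≠ 0) (u : ℤ → ℝ) (n : ℤ) :
    nsum a b p (pos u) n + nsum a b p (neg u) n ≤ nsum a b p u n := by
  have hdlt := abs_pow_add_abs_pow_le hp (dlt_pos_dlt_neg_same_sign u n)
  have hval := abs_pow_add_abs_pow_le hp (pos_neg_same_sign u n)
  rw [dlt_pos_add_dlt_neg] at hdlt
  rw [pos_add_neg] at hval
  unfold nsum
  nlinarith [mul_le_mul_of_nonneg_left hdlt (ha n), mul_le_mul_of_nonneg_left hval (hb n)]

theorem dnorm_pow_eq_tsum (hp : p ≠ 0) (u : ℤ → ℝ) :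
    dnorm a b p u ^ p = ∑' n, nsum a b p u n := by
  rw [dnorm, ← rpow_natCast, ← rpow_mul (tsum_nonneg (nsum_nonneg ha hb u)),
    inv_mul_cancel₀ (by exact_mod_cast hp), rpow_one]

theorem dnorm_pos_pow_add_dnorm_neg_pow_le (hp : p ≠ 0) {u : ℤ → ℝ} (hu : memE a b p u) :
    dnorm a b p (pos u) ^ p + dnorm a b p (neg u) ^ p ≤ dnorm a b p u ^ p := by
  have hle := nsum_pos_add_nsum_neg_le ha hb hp u
  have hpos : memE a b p (pos u) := hu.of_nonneg_of_le (nsum_nonneg ha hb _)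
    fun n => by linarith [hle n, nsum_nonneg (p := p) ha hb (neg u) n]
  have hneg : memE a b p (neg u) := hu.of_nonneg_of_le (nsum_nonneg ha hb _)
    fun n => by linarith [hle n, nsum_nonneg (p := p) ha hb (pos u) n]
  simp only [dnorm_pow_eq_tsum ha hb hp]
  rw [← hpos.tsum_add hneg]
  exact (hpos.add hneg).tsum_le_tsum hle hu

theorem dnorm_const_mul_pow (hp : p ≠ 0) (t : ℝ) (u : ℤ → ℝ) :
    dnorm a b p (fun n => t * u n) ^ p = |t| ^ p * dnorm a b p u ^ p := by
  simp only [dnorm_pow_eq_tsum ha hb hp, ← tsum_mul_left]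
  refine tsum_congr fun n => ?_
  simp only [nsum, dlt, ← mul_sub, abs_mul, mul_pow]
  ring

end Norm

section Functional

variable {a b c : ℤ → ℝ} {p : ℕ} {q r : ℝ}

theorem logSummand_const_mul (hq : q ≠ 0) {t : ℝ} (ht : 0 ≤ t) (u : ℤ → ℝ) (n : ℤ) :
    logSummand c q r (fun m => t * u m) n
      = t ^ q * logSummand c q r u n + r * t ^ q * log t * (c n * |u n| ^ q) := by
  rcases ht.eq_or_lt with rfl | ht
  · simp [logSummand, zero_rpow hq]
  rcases eq_or_ne (u n) 0 with hu | hu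
  · simp [logSummand, hu, zero_rpow hq]
  have hu := abs_pos.2 hu
  rw [logSummand, logSummand, abs_mul, abs_of_pos ht, log_rpow (mul_pos ht hu), log_rpow hu,
    log_mul ht.ne' hu.ne', mul_rpow ht.le hu.le]
  ring

theorem en_const_mul (ha : ∀ n, 0 ≤ a n) (hb : ∀ n, 0 ≤ b n) (hp : p ≠ 0) (hq : q ≠ 0)
    {u : ℤ → ℝ} (hlog : Summable (logSummand c q r u))
    (hS : Summable fun n => c n * |u n| ^ q) {t : ℝ} (ht : 0 ≤ t) :
    En a b c p q r (fun n => t * u n)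
      = t ^ p / p * dnorm a b p u ^ p + r * t ^ q / q ^ 2 * ∑' n, c n * |u n| ^ q
        - t ^ q / q * (∑' n, logSummand c q r u n + r * log t * ∑' n, c n * |u n| ^ q) := by
  have hpow (n : ℤ) : c n * |t * u n| ^ q = t ^ q * (c n * |u n| ^ q) := by
    rw [abs_mul, abs_of_nonneg ht, mul_rpow ht (abs_nonneg _)]
    ring
  rw [En, dnorm_const_mul_pow ha hb hp, abs_of_nonneg ht, tsum_congr hpow,
    tsum_congr (logSummand_const_mul hq ht u), (hlog.mul_left _).tsum_add (hS.mul_left _),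
    tsum_mul_left, tsum_mul_left, tsum_mul_left]
  ring

theorem pr_self (ha : ∀ n, 0 ≤ a n) (hb : ∀ n, 0 ≤ b n) (hp : 2 ≤ p) (hq : q ≠ 0)
    (u : ℤ → ℝ) : pr a b c p q r u u = dnorm a b p u ^ p - ∑' n, logSummand c q r u n := by
  rw [pr, dnorm_pow_eq_tsum ha hb (by omega)]
  congr 1 <;> refine tsum_congr fun n => ?_
  · rw [nsum]
    linear_combination a n * abs_pow_sub_two_mul_self_mul_self hp (dlt u n)
      + b n * abs_pow_sub_two_mul_self_mul_self hp (u n)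
  · rw [logSummand]
    linear_combination c n * log (|u n| ^ r) * abs_rpow_sub_two_mul_self_mul_self hq (u n)

end Functional

theorem stmt6_general (p : ℕ) (hp2 : 2 ≤ p)
    (q r : ℝ) (hpq : (p : ℝ) < q) (hr : 1 ≤ r)
    (a b c : ℤ → ℝ)
    (ha : ∀ n, 0 < a n) (hb : ∀ n, 0 < b n) (hc : ∀ n, 0 < c n)
    (b0 : ℝ) (hb0 : 0 < b0) (hbb : ∀ n, b0 ≤ b n)
    (hcsum : Summable c)
    (u : ℤ → ℝ) (hu : memD a b c p q r u) (t : ℝ) (ht : 0 ≤ t) :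
    En a b c p q r (fun n => t * u n)
        + ((1 - t ^ q) / q) * pr a b c p q r u u
        + ((1 - t ^ p) / (p : ℝ) - (1 - t ^ q) / q)
            * (dnorm a b p (pos u) ^ p + dnorm a b p (neg u) ^ p)
      ≤ En a b c p q r u := by
  have hp : p ≠ 0 := by omega
  have hp0 : (0 : ℝ) < p := by exact_mod_cast hp.bot_lt
  have hq : 0 < q := hp0.trans hpq
  have ha' (n : ℤ) := (ha n).le
  have hb' (n : ℤ) := (hb n).le
  have hc' (n : ℤ) := (hc n).le
  have hS : Summable fun n => c n * |u n| ^ q :=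
    summable_mul_abs_rpow_of_eventually_abs_le_one hcsum hc' hq.le
      (eventually_abs_le_one_of_summable_mul_pow hb0 hbb hp
        (summable_mul_abs_pow_of_memE ha' hb' hu.1))
  have hφ : 0 ≤ (1 - t ^ p) / (p : ℝ) - (1 - t ^ q) / q := by
    have hmono := one_sub_rpow_div_le_one_sub_rpow_div hp0 hpq.le ht
    rw [rpow_natCast] at hmono
    linarith
  have hsplit := mul_le_mul_of_nonneg_left (dnorm_pos_pow_add_dnorm_neg_pow_le ha' hb' hp hu.1) hφ
  have hgS : 0 ≤ r / q * ((1 - t ^ q) / q + t ^ q * log t) * ∑' n, c n * |u n| ^ q :=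
    mul_nonneg
      (mul_nonneg (div_nonneg (by linarith) hq.le) (one_sub_rpow_div_add_rpow_mul_log_nonneg hq ht))
      (tsum_nonneg fun n => mul_nonneg (hc' n) (by positivity))
  rw [en_const_mul ha' hb' hp hq.ne' hu.2 hS ht, pr_self ha' hb' hp2 hq.ne', En]
  linear_combination hsplit + hgS

theorem stmt6 (p : ℕ) (hp2 : 2 ≤ p) (hpe : Even p)
    (q r : ℝ) (hpq : (p : ℝ) < q) (hr : 1 ≤ r)
    (a b c : ℤ → ℝ)
    (ha : ∀ n, 0 < a n) (hb : ∀ n, 0 < b n) (hc : ∀ n, 0 < c n)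
    (b0 : ℝ) (hb0 : 0 < b0) (hbb : ∀ n, b0 ≤ b n)
    (hbinf : Tendsto b cofinite atTop)
    (c0 : ℝ) (hc0 : 0 < c0) (hcc : ∀ n, c n ≤ c0)
    (hcsum : Summable c)
    (u : ℤ → ℝ) (hu : memD a b c p q r u) (t : ℝ) (ht : 0 ≤ t) :
    En a b c p q r (fun n => t * u n)
        + ((1 - t ^ q) / q) * pr a b c p q r u u
        + ((1 - t ^ p) / (p : ℝ) - (1 - t ^ q) / q)
            * (dnorm a b p (pos u) ^ p + dnorm a b p (neg u) ^ p)
      ≤ En a b c p q r u :=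
  stmt6_general p hp2 q r hpq hr a b c ha hb hc b0 hb0 hbb hcsum u hu t ht

end DPLap
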